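/- arXiv:math/0612801 — 5 statements merged into one kernel-verified Lean document; each statement's English description precedes it below -/
import Mathlib

section
/- Let F be a field and let a, b, c ∈ F[X] with a and b relatively prime and c ≠ 0. Then there exists a finite subset S ⊆ F such that for every α ∈ F \ S the polynomials a + αb and c are relatively prime. Moreover, if the formal derivative b′ of b is nonzero, then S may be chosen so that in addition a + αb is a separable polynomial for every α ∈ F \ S. -/
open Polynomial

private lemma exists_common_root {K : Type} [Field K] [IsAlgClosed K]
    (p q : K[X]) (hp : p ≠ 0) (h : ¬ IsCoprime p q) :
    ∃ z : K, p.eval z = 0 ∧ q.eval z = 0 := by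
  classical
  set d := EuclideanDomain.gcd p q with hd
  have hdu : ¬ IsUnit d := fun hu => h (EuclideanDomain.gcd_isUnit_iff.mp hu)
  have hd0 : d ≠ 0 := by
    intro h0
    exact hp (EuclideanDomain.gcd_eq_zero_iff.mp (hd ▸ h0)).1
  have hdeg : d.degree ≠ 0 := fun h0 => hdu (isUnit_iff_degree_eq_zero.mpr h0)
  obtain ⟨z, hz⟩ := IsAlgClosed.exists_root d hdeg
  refine ⟨z, ?_, ?_⟩
  · obtain ⟨r, hr⟩ := EuclideanDomain.gcd_dvd_left p q
    rw [hr, eval_mul, ← hd, hz.eq_zero, zero_mul]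
  · obtain ⟨r, hr⟩ := EuclideanDomain.gcd_dvd_right p q
    rw [hr, eval_mul, ← hd, hz.eq_zero, zero_mul]

private lemma no_common_root_finset {F : Type} [Field F]
    (a b d : Polynomial F) (hab : IsCoprime a b) (hd : d ≠ 0) :
    ∃ S : Finset F, ∀ α : F, α ∉ S → ∀ z : AlgebraicClosure F,
      ¬ ((((a + Polynomial.C α * b)).map (algebraMap F (AlgebraicClosure F))).eval z = 0 ∧
        ((d.map (algebraMap F (AlgebraicClosure F)))).eval z = 0) := by
  classical
  set K := AlgebraicClosure F
  set φ := algebraMap F K with hφ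
  set A := a.map φ
  set B := b.map φ
  set t : Finset K := ((d.map φ).roots.toFinset).image (fun z => -(A.eval z) / (B.eval z))
    with ht
  have hfin : (φ ⁻¹' (t : Set K)).Finite :=
    Set.Finite.preimage ((algebraMap F K).injective.injOn) t.finite_toSet
  refine ⟨hfin.toFinset, fun α hα z ⟨hpz, hdz⟩ => ?_⟩
  have hAB : IsCoprime A B := hab.map (Polynomial.mapRingHom φ)
  have hpz' : A.eval z + φ α * B.eval z = 0 := by
    rwa [Polynomial.map_add, Polynomial.map_mul, map_C, eval_add, eval_mul, eval_C] at hpz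
  have hB : B.eval z ≠ 0 := by
    intro hB0
    obtain ⟨u, v, huv⟩ := hAB
    have hA0 : A.eval z = 0 := by rw [hB0, mul_zero, add_zero] at hpz'; exact hpz'
    have := congrArg (Polynomial.eval z) huv
    simp [hA0, hB0] at this
  have hmem : φ α ∈ t := by
    rw [ht]
    apply Finset.mem_image.mpr
    refine ⟨z, ?_, ?_⟩
    · rw [Multiset.mem_toFinset,
        mem_roots (Polynomial.map_ne_zero_iff (algebraMap F K).injective |>.mpr hd)]
      exact hdz
    · rw [div_eq_iff hB]
      linear_combination -hpz'
  exact hα (hfin.mem_toFinset.mpr hmem)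

/-- For relatively prime `a, b ∈ F[X]` and `c ≠ 0` there is a finite set `S ⊆ F` such that
for all `α ∉ S` the polynomials `a + α b` and `c` are relatively prime; moreover, if
`b' ≠ 0`, then `S` can be chosen so that in addition `a + α b` is separable. -/
theorem exists_finset_coprime_and_separable
    (F : Type) [Field F] (a b c : Polynomial F)
    (hab : IsCoprime a b) (hc : c ≠ 0) :
    (∃ S : Finset F, ∀ α : F, α ∉ S → IsCoprime (a + Polynomial.C α * b) c) ∧
    (Polynomial.derivative b ≠ 0 →
      ∃ S : Finset F, ∀ α : F, α ∉ S →
        IsCoprime (a + Polynomial.C α * b) c ∧ (a + Polynomial.C α * b).Separable) := by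
  classical
  set K := AlgebraicClosure F
  set φ := algebraMap F K with hφ
  constructor
  · obtain ⟨S, hS⟩ := no_common_root_finset a b c hab hc
    refine ⟨S, fun α hα => ?_⟩
    rw [← isCoprime_map φ]
    by_contra hnc
    have hc' : c.map φ ≠ 0 := Polynomial.map_ne_zero_iff φ.injective |>.mpr hc
    obtain ⟨z, hz1, hz2⟩ := exists_common_root (c.map φ) ((a + Polynomial.C α * b).map φ)
      hc' (fun h => hnc h.symm)
    exact hS α hα z ⟨hz2, hz1⟩
  · intro hb'
    set W := a * Polynomial.derivative b - Polynomial.derivative a * b with hW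
    have hW0 : W ≠ 0 := by
      intro h0
      rcases eq_or_ne a 0 with ha | ha
      · have : IsUnit b := isCoprime_zero_left.mp (ha ▸ hab)
        obtain ⟨k, hk⟩ := Polynomial.isUnit_iff.mp this
        exact hb' (by rw [← hk.2, derivative_C])
      · have hdvd : a ∣ Polynomial.derivative a * b := by
          have : a * Polynomial.derivative b = Polynomial.derivative a * b := by
            linear_combination h0
          exact ⟨Polynomial.derivative b, this.symm⟩
        have hdvd' : a ∣ Polynomial.derivative a := hab.dvd_of_dvd_mul_right hdvd
        have hda : Polynomial.derivative a = 0 := by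
          by_contra hda
          rcases eq_or_ne a.natDegree 0 with hn | hn
          · exact hda (Polynomial.derivative_of_natDegree_zero hn)
          · have h1 := Polynomial.natDegree_le_of_dvd hdvd' hda
            have h2 := Polynomial.natDegree_derivative_lt hn
            omega
        rw [hW, hda, zero_mul, sub_zero] at h0
        rcases mul_eq_zero.mp h0 with h | h
        · exact ha h
        · exact hb' h
    obtain ⟨S, hS⟩ := no_common_root_finset a b (c * W) hab (mul_ne_zero hc hW0)
    refine ⟨S, fun α hα => ?_⟩
    set p := a + Polynomial.C α * b with hp
    have hAB : IsCoprime (a.map φ) (b.map φ) := hab.map (Polynomial.mapRingHom φ)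
    -- any common root of p and c (or of p and p') is a common root of p and c*W
    have key : ∀ z : K, (p.map φ).eval z = 0 → ((c * W).map φ).eval z ≠ 0 := by
      intro z h1 h2
      exact hS α hα z ⟨h1, h2⟩
    constructor
    · rw [← isCoprime_map φ]
      by_contra hnc
      have hc' : c.map φ ≠ 0 := Polynomial.map_ne_zero_iff φ.injective |>.mpr hc
      obtain ⟨z, hz1, hz2⟩ := exists_common_root (c.map φ) (p.map φ) hc' (fun h => hnc h.symm)
      refine key z hz2 ?_
      rw [Polynomial.map_mul, eval_mul, hz1, zero_mul]
    · -- separability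
      have hp0 : p ≠ 0 := by
        intro h0
        have hbd : b ∣ a := ⟨-Polynomial.C α, by linear_combination h0⟩
        have hub : IsUnit b := hab.isUnit_of_dvd' hbd dvd_rfl
        obtain ⟨k, hk⟩ := Polynomial.isUnit_iff.mp hub
        exact hb' (by rw [← hk.2, derivative_C])
      rw [Polynomial.separable_def, ← isCoprime_map φ]
      by_contra hnc
      have hp0' : p.map φ ≠ 0 := Polynomial.map_ne_zero_iff φ.injective |>.mpr hp0
      obtain ⟨z, hz1, hz2⟩ := exists_common_root (p.map φ) ((Polynomial.derivative p).map φ)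
        hp0' hnc
      -- derive that z is a root of W.map φ
      have hB : (b.map φ).eval z ≠ 0 := by
        intro hB0
        have hA0 : (a.map φ).eval z = 0 := by
          rw [hp, Polynomial.map_add, Polynomial.map_mul, map_C, eval_add, eval_mul, eval_C,
            hB0, mul_zero, add_zero] at hz1
          exact hz1
        obtain ⟨u, v, huv⟩ := hAB
        have := congrArg (Polynomial.eval z) huv
        simp [hA0, hB0] at this
      have e1 : (a.map φ).eval z + φ α * (b.map φ).eval z = 0 := by
        rw [hp, Polynomial.map_add, Polynomial.map_mul, map_C, eval_add, eval_mul, eval_C] at hz1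
        exact hz1
      have e2 : ((Polynomial.derivative a).map φ).eval z
          + φ α * ((Polynomial.derivative b).map φ).eval z = 0 := by
        rw [hp] at hz2
        rw [derivative_add, derivative_mul, derivative_C, zero_mul, zero_add,
          Polynomial.map_add, Polynomial.map_mul, map_C, eval_add, eval_mul, eval_C] at hz2
        exact hz2
      have hWz : ((W.map φ)).eval z = 0 := by
        rw [hW, Polynomial.map_sub, Polynomial.map_mul, Polynomial.map_mul,
          eval_sub, eval_mul, eval_mul]
        have ha' : (a.map φ).eval z = -(φ α) * (b.map φ).eval z := by linear_combination e1
        have hda' : ((Polynomial.derivative a).map φ).eval z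
            = -(φ α) * ((Polynomial.derivative b).map φ).eval z := by linear_combination e2
        rw [ha', hda']; ring
      refine key z hz1 ?_
      rw [Polynomial.map_mul, eval_mul, hWz, mul_zero]
end

section
/- Let n be a positive integer, let A be a transitive subgroup of the symmetric group Sₙ acting on n points, and let e be a positive integer with n/2 < e < n and gcd(e, n) = 1. If A contains an e-cycle (a cyclic permutation whose support has cardinality e), then the action of A on the n points is primitive. -/
/-!
Let `B` be a block with at least two points; translating it, we may assume it meets the support
of the `e`-cycle `σ`. The block property leaves two cases. Either `σ` fixes `B`; then `B`
contains the whole `⟨σ⟩`-orbit `supp σ`, so `|B| ≥ e > n/2` and `B` is everything. Or `σ • B`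
is disjoint from `B`; then `B` contains no fixed point of `σ`, so it is a block of the
transitive `⟨σ⟩`-action on `supp σ` and `|B|` divides `e` as well as `n`, whence `|B| = 1`.
-/

open Pointwise MulAction

/-- An action of a group `G` on `X` is primitive if it is transitive and every block of
the action is a singleton (a subsingleton) or the whole set. -/
def MulAction.IsPreprimitive' (G X : Type) [Group G] [MulAction G X] : Prop :=
  MulAction.IsPretransitive G X ∧
    ∀ B : Set X, MulAction.IsBlock G B → B.Subsingleton ∨ B = Set.univ

namespace MulAction

variable {G X : Type*} [Group G] [MulAction G X] {B : Set X}

theorem IsBlock.of_subgroup_le {H K : Subgroup G} (hHK : H ≤ K) (hB : IsBlock K B) :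
    IsBlock H B :=
  fun g₁ g₂ h ↦ hB (g₁ := Subgroup.inclusion hHK g₁) (g₂ := Subgroup.inclusion hHK g₂) h

theorem IsBlock.ncard_dvd_ncard_orbit (hB : IsBlock G B) {a : X} (hBa : B ⊆ orbit G a)
    (hB_ne : B.Nonempty) : B.ncard ∣ (orbit G a).ncard := by
  let j : orbit G a →[G] X := ⟨Subtype.val, fun _ _ ↦ rfl⟩
  have hpre : (j ⁻¹' B).ncard = B.ncard :=
    Set.ncard_preimage_of_injective_subset_range Subtype.val_injective fun y hy ↦ ⟨⟨y, hBa hy⟩, rfl⟩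
  obtain ⟨b, hb⟩ := hB_ne
  rw [← hpre, ← Nat.card_coe_set_eq]
  exact (hB.preimage j).ncard_dvd_card ⟨⟨b, hBa hb⟩, hb⟩

end MulAction

namespace Equiv.Perm

variable {α : Type*} [Fintype α] [DecidableEq α] {σ : Perm α} {x : α}

theorem IsCycle.orbit_zpowers_eq_support (hσ : σ.IsCycle) (hx : x ∈ σ.support) :
    orbit (Subgroup.zpowers σ) x = σ.support := by
  ext y
  constructor
  · rintro ⟨⟨_, i, rfl⟩, rfl⟩
    exact zpow_apply_mem_support.2 hx
  · intro hy
    obtain ⟨i, rfl⟩ := hσ.exists_zpow_eq (mem_support.1 hx) (mem_support.1 hy)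
    exact ⟨⟨σ ^ i, i, rfl⟩, rfl⟩

theorem subset_support_of_disjoint_smul {B : Set α} (h : _root_.Disjoint (σ • B) B) :
    B ⊆ σ.support := fun y hy ↦ by
  by_contra hy'
  exact Set.disjoint_left.1 h ⟨y, hy, notMem_support.1 hy'⟩ hy

theorem IsCycle.support_subset_or_ncard_dvd (hσ : σ.IsCycle) {B : Set α}
    (hB : IsBlock (Subgroup.zpowers σ) B) (hxB : x ∈ B) (hx : x ∈ σ.support) :
    (σ.support : Set α) ⊆ B ∨ B.ncard ∣ σ.support.card := by
  have horbit := hσ.orbit_zpowers_eq_support hx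
  rcases hB.smul_eq_or_disjoint ⟨σ, Subgroup.mem_zpowers σ⟩ with hfix | hdisj
  · left
    rw [← horbit]
    rintro _ ⟨⟨_, i, rfl⟩, rfl⟩
    have hσB : σ ∈ stabilizer (Perm α) B := hfix
    rw [← zpow_mem hσB i]
    exact Set.smul_mem_smul_set hxB
  · right
    rw [← Set.ncard_coe_finset, ← horbit]
    exact hB.ncard_dvd_ncard_orbit (horbit ▸ subset_support_of_disjoint_smul hdisj) ⟨x, hxB⟩

end Equiv.Perm

namespace MulAction

theorem IsBlock.subsingleton_or_eq_univ_of_isCycle {α : Type*} [Fintype α] [DecidableEq α]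
    {G : Subgroup (Equiv.Perm α)} [IsPretransitive G α] {B : Set α} (hB : IsBlock G B)
    {σ : Equiv.Perm α} (hσG : σ ∈ G) (hσ : σ.IsCycle) (hcard : Nat.card α < 2 * σ.support.card)
    (hcop : σ.support.card.Coprime (Nat.card α)) :
    B.Subsingleton ∨ B = Set.univ := by
  refine or_iff_not_imp_left.2 fun hBnt ↦ ?_
  rw [Set.not_subsingleton_iff] at hBnt
  obtain ⟨x, hx⟩ : σ.support.Nonempty := Finset.card_pos.1 (by omega)
  obtain ⟨a, ha⟩ := hBnt.nonempty
  obtain ⟨g, rfl⟩ := exists_smul_eq G a x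
  have hgB : IsBlock G (g • B) := hB.translate g
  have hcardB : 1 < (g • B).ncard := by
    rw [Set.ncard_smul_set]
    exact Set.one_lt_ncard_iff_nontrivial.2 hBnt
  suffices g • B = Set.univ by simpa using congr(g⁻¹ • $this)
  rcases hσ.support_subset_or_ncard_dvd (hgB.of_subgroup_le (Subgroup.zpowers_le.2 hσG))
    ⟨a, ha, rfl⟩ hx with hsub | hdvd
  · refine hgB.eq_univ_of_card_lt ?_
    have hle : σ.support.card ≤ (g • B).ncard :=
      (Set.ncard_coe_finset _).symm.trans_le (Set.ncard_le_ncard hsub)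
    omega
  · have hdvd_card : (g • B).ncard ∣ Nat.card α := hgB.ncard_dvd_card ⟨_, a, ha, rfl⟩
    have hone := Nat.eq_one_of_dvd_one (hcop ▸ Nat.dvd_gcd hdvd hdvd_card)
    omega

end MulAction

theorem isPreprimitive_of_contains_cycle_general
    (n : ℕ) (A : Subgroup (Equiv.Perm (Fin n)))
    (hA : MulAction.IsPretransitive A (Fin n))
    (e : ℕ) (he₁ : n < 2 * e) (hcop : Nat.Coprime e n)
    (σ : Equiv.Perm (Fin n)) (hσA : σ ∈ A)
    (hcyc : σ.IsCycle) (hsupp : σ.support.card = e) :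
    MulAction.IsPreprimitive' A (Fin n) := by
  subst hsupp
  refine ⟨hA, fun B hB ↦ hB.subsingleton_or_eq_univ_of_isCycle hσA hcyc ?_ ?_⟩
  · simpa using he₁
  · simpa using hcop

/-- A transitive subgroup `A ≤ Sₙ` containing an `e`-cycle, where `n/2 < e < n` and
`gcd(e,n) = 1`, is primitive. -/
theorem isPreprimitive_of_contains_cycle
    (n : ℕ) (hn : 0 < n) (A : Subgroup (Equiv.Perm (Fin n)))
    (hA : MulAction.IsPretransitive A (Fin n))
    (e : ℕ) (he₁ : n < 2 * e) (he₂ : e < n) (hcop : Nat.Coprime e n)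
    (σ : Equiv.Perm (Fin n)) (hσA : σ ∈ A)
    (hcyc : σ.IsCycle) (hsupp : σ.support.card = e) :
    MulAction.IsPreprimitive' A (Fin n) :=
  isPreprimitive_of_contains_cycle_general n A hA e he₁ hcop σ hσA hcyc hsupp
end

section
/- Let n be a positive integer, let A be a transitive subgroup of the symmetric group Sₙ acting on n points, and let e be a positive integer with n/2 < e < n and gcd(e, n) = 1. If A contains an e-cycle and also contains a transposition, then A = Sₙ. -/
/-!
Let `B` be a block of `A` through a point of the support of the `e`-cycle `σ`. If `B` also
contains a fixed point of `σ`, then every power of `σ` stabilises `B`, so `B` contains the whole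
support and has more than `n / 2` points, forcing `B` to be everything. Otherwise `B` lies in
the support, on which the cycle acts transitively, so `|B|` divides both `e` and `n`, hence
`|B| = 1`. So `A` is primitive, and Jordan's theorem turns the transposition into `A = Sₙ`.
-/

open Equiv MulAction
open scoped Pointwise

namespace Equiv.Perm

variable {α : Type*} [Fintype α] [DecidableEq α] {G : Subgroup (Perm α)}

theorem support_subset_of_isBlock {B : Set α} (hB : IsBlock G B) {g : Perm α} (hg : g ∈ G)
    (hgc : g.IsCycle) {x y : α} (hx : x ∈ B) (hgx : g x ≠ x) (hy : y ∈ B) (hgy : g y = y) :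
    (g.support : Set α) ⊆ B := by
  have hgB (k : ℤ) : (⟨g, hg⟩ ^ k : G) • B = B := by
    refine hB.smul_eq_of_mem hy ?_
    rwa [Subgroup.smul_def, Subgroup.coe_zpow, Perm.smul_def,
      zpow_apply_eq_self_of_apply_eq_self hgy]
  intro z hz
  obtain ⟨k, rfl⟩ := hgc.sameCycle hgx (mem_support.mp hz)
  rw [← hgB k]
  exact Set.smul_mem_smul_set hx

theorem ncard_dvd_card_support_of_isBlock {B : Set α} (hB : IsBlock G B) (hB_ne : B.Nonempty)
    {g : Perm α} (hg : g ∈ G) (hgc : g.IsCycle) (hBg : B ⊆ g.support) :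
    B.ncard ∣ g.support.card := by
  set s : Set α := (g.support : Set α)ᶜ
  -- the elements of `G` fixing every point outside the support act transitively on the support
  have := isPretransitive_of_isCycle_mem hgc hg
  have hB' : IsBlock (fixingSubgroup G s)
      (Subtype.val ⁻¹' B : Set (SubMulAction.ofFixingSubgroup G s)) :=
    (hB.subgroup (H := fixingSubgroup G s)).subtype_val_preimage
  have hrange : B ⊆ Set.range (Subtype.val : SubMulAction.ofFixingSubgroup G s → α) :=
    fun x hx ↦ ⟨⟨x, by simpa [s, SubMulAction.mem_ofFixingSubgroup_iff] using hBg hx⟩, rfl⟩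
  have hcard : Nat.card (SubMulAction.ofFixingSubgroup G s) = g.support.card := by
    rw [← Nat.card_eq_finsetCard]
    exact Nat.card_congr <| subtypeEquivRight fun x ↦ by
      simp [s, SubMulAction.mem_ofFixingSubgroup_iff]
  rw [← Set.ncard_preimage_of_injective_subset_range Subtype.val_injective hrange, ← hcard]
  obtain ⟨x, hx⟩ := hB_ne
  obtain ⟨y, rfl⟩ := hrange hx
  exact hB'.ncard_dvd_card ⟨y, hx⟩

theorem isPreprimitive_of_isCycle_mem [IsPretransitive G α] {g : Perm α} (hg : g ∈ G)
    (hgc : g.IsCycle) (hcard : Fintype.card α < 2 * g.support.card)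
    (hcop : g.support.card.Coprime (Fintype.card α)) :
    IsPreprimitive G α := by
  obtain ⟨x, hx⟩ := hgc.nonempty_support
  refine .of_isTrivialBlock_base x fun {B} hxB hB ↦ ?_
  by_cases hBg : B ⊆ g.support
  · left
    have hdvd_card : B.ncard ∣ Fintype.card α :=
      Nat.card_eq_fintype_card (α := α) ▸ hB.ncard_dvd_card ⟨x, hxB⟩
    have hdvd_one : B.ncard ∣ 1 := hcop ▸
      Nat.dvd_gcd (ncard_dvd_card_support_of_isBlock hB ⟨x, hxB⟩ hg hgc hBg) hdvd_card
    exact Set.ncard_le_one_iff_subsingleton.mp (Nat.le_of_dvd one_pos hdvd_one)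
  · right
    obtain ⟨y, hyB, hyg⟩ := Set.not_subset.mp hBg
    have hsub := support_subset_of_isBlock hB hg hgc hxB (mem_support.mp hx) hyB
      (notMem_support.mp hyg)
    refine hB.eq_univ_of_card_lt ?_
    calc Nat.card α = Fintype.card α := Nat.card_eq_fintype_card
      _ < 2 * g.support.card := hcard
      _ ≤ B.ncard * 2 := by
        rw [mul_comm, ← Set.ncard_coe_finset]
        gcongr
        exact B.toFinite

end Equiv.Perm

theorem eq_top_of_contains_cycle_and_swap_general
    (n : ℕ) (A : Subgroup (Equiv.Perm (Fin n)))
    (hA : MulAction.IsPretransitive A (Fin n))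
    (e : ℕ) (he₁ : n < 2 * e) (hcop : Nat.Coprime e n)
    (σ : Equiv.Perm (Fin n)) (hσA : σ ∈ A)
    (hcyc : σ.IsCycle) (hsupp : σ.support.card = e)
    (τ : Equiv.Perm (Fin n)) (hτA : τ ∈ A) (hτ : τ.IsSwap) :
    A = ⊤ := by
  subst hsupp
  have hprim : IsPreprimitive A (Fin n) :=
    Perm.isPreprimitive_of_isCycle_mem hσA hcyc (by simpa using he₁) (by simpa using hcop)
  exact Perm.subgroup_eq_top_of_isPreprimitive_of_isSwap_mem hprim τ hτ hτA

/-- A transitive subgroup `A ≤ Sₙ` containing an `e`-cycle, where `n/2 < e < n` and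
`gcd(e,n) = 1`, and a transposition is the full symmetric group. -/
theorem eq_top_of_contains_cycle_and_swap
    (n : ℕ) (hn : 0 < n) (A : Subgroup (Equiv.Perm (Fin n)))
    (hA : MulAction.IsPretransitive A (Fin n))
    (e : ℕ) (he₁ : n < 2 * e) (he₂ : e < n) (hcop : Nat.Coprime e n)
    (σ : Equiv.Perm (Fin n)) (hσA : σ ∈ A)
    (hcyc : σ.IsCycle) (hsupp : σ.support.card = e)
    (τ : Equiv.Perm (Fin n)) (hτA : τ ∈ A) (hτ : τ.IsSwap) :
    A = ⊤ :=
  eq_top_of_contains_cycle_and_swap_general n A hA e he₁ hcop σ hσA hcyc hsupp τ hτA hτ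
end

section
/- Let F be a field, let a(X), b(X) ∈ F[X] with b ≠ 0, and let f(X,Y) = a(X) + b(X)Y = Σ_{i=0}^{n} (a_i + b_i Y) X^i ∈ F[X,Y] be irreducible, with f separable of degree n ≥ 1 as a polynomial in X over the rational function field F(Y). Let R be the localization of the polynomial ring F[Y] at the multiplicative set generated by the nonzero polynomial a_n + b_n Y, and let S = R[X]/(f). Then S is an integral domain that is integrally closed in its field of fractions F(Y)[X]/(f). -/
set_option synthInstance.maxHeartbeats 1000000
set_option maxHeartbeats 1000000

open Polynomial

/-- The polynomial `f(X,Y) = a(X) + b(X)·Y ∈ F[X,Y]`, realized as a polynomial in `X`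
whose coefficients are polynomials in `Y`; its `n`-th `X`-coefficient is `aₙ + bₙ Y`. -/
noncomputable def linY (F : Type) [Field F] (a b : Polynomial F) :
    Polynomial (Polynomial F) :=
  a.map (Polynomial.C : F →+* Polynomial F) +
    Polynomial.C Polynomial.X * b.map (Polynomial.C : F →+* Polynomial F)

lemma linY_coeff (F : Type) [Field F] (a b : Polynomial F) (i : ℕ) :
    (linY F a b).coeff i
      = Polynomial.C (a.coeff i) + Polynomial.X * Polynomial.C (b.coeff i) := by
  simp [linY, coeff_map, coeff_C_mul]

lemma linY_coprime (F : Type) [Field F] (a b : Polynomial F) (hb : b ≠ 0)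
    (hirr : Irreducible (linY F a b)) : IsCoprime a b := by
  classical
  by_contra hncop
  have hdu : ¬ IsUnit (EuclideanDomain.gcd a b) := fun h =>
    hncop ((EuclideanDomain.gcd_isUnit_iff (x := a) (y := b)).mp h)
  set d := EuclideanDomain.gcd a b with hd
  obtain ⟨a', ha'⟩ : d ∣ a := EuclideanDomain.gcd_dvd_left a b
  obtain ⟨b', hb'⟩ : d ∣ b := EuclideanDomain.gcd_dvd_right a b
  have hq : linY F a b = (d.map Polynomial.C) * (a'.map Polynomial.C
      + Polynomial.C Polynomial.X * b'.map Polynomial.C) := by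
    rw [linY, ha', hb', Polynomial.map_mul, Polynomial.map_mul]
    ring
  have hd0 : d ≠ 0 := by
    intro h0
    apply hb
    rw [hb', h0, zero_mul]
  rcases hirr.isUnit_or_isUnit hq with h | h
  · -- the mapped gcd is a unit : contradiction since it is a unit iff d is
    apply hdu
    have h1 : (d.map (Polynomial.C : F →+* Polynomial F)).natDegree = 0 :=
      natDegree_eq_zero_of_isUnit h
    rw [natDegree_map_eq_of_injective (Polynomial.C_injective) d] at h1
    have h2 : d = Polynomial.C (d.coeff 0) := eq_C_of_natDegree_eq_zero h1
    rw [h2]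
    refine Polynomial.isUnit_C.mpr (isUnit_iff_ne_zero.mpr ?_)
    intro h3
    exact hd0 (by rw [h2, h3, map_zero])
  · -- the cofactor is a unit, so `b = 0`, contradiction
    apply hb
    obtain ⟨q0, -, hq0⟩ := Polynomial.isUnit_iff.mp h
    have hq0d : q0.natDegree = 0 :=
      natDegree_eq_zero_of_isUnit (Polynomial.isUnit_C.mp (hq0 ▸ h))
    ext i
    have hco : (linY F a b).coeff i = Polynomial.C (d.coeff i) * q0 := by
      rw [hq, ← hq0, coeff_mul_C, coeff_map]
    have := congrArg (fun p : Polynomial F => p.coeff 1) hco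
    simpa [linY_coeff, coeff_C_mul,
      coeff_eq_zero_of_natDegree_lt (show q0.natDegree < 1 by omega)] using this

lemma linY_r_ne_zero (F : Type) [Field F] (a b : Polynomial F) (hb : b ≠ 0)
    (hcop : IsCoprime a b) (n : ℕ) (hn : 1 ≤ n)
    (hlc : (linY F a b).coeff n ≠ 0) :
    Polynomial.C (a.coeff n) * b - Polynomial.C (b.coeff n) * a ≠ 0 := by
  intro h0
  have h1 : Polynomial.C (a.coeff n) * b = Polynomial.C (b.coeff n) * a :=
    sub_eq_zero.mp h0
  by_cases hbn : b.coeff n = 0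
  · have han : a.coeff n = 0 := by
      have : Polynomial.C (a.coeff n) * b = 0 := by rw [h1, hbn, map_zero, zero_mul]
      rcases mul_eq_zero.mp this with h | h
      · exact Polynomial.C_eq_zero.mp h
      · exact absurd h hb
    exact hlc (by rw [linY_coeff, han, hbn]; simp)
  · have hdvd : b ∣ Polynomial.C (b.coeff n) :=
      (hcop.symm).dvd_of_dvd_mul_right ⟨Polynomial.C (a.coeff n), by rw [← h1]; ring⟩
    have hdeg : b.natDegree ≤ 0 := by
      have := Polynomial.natDegree_le_of_dvd hdvd (by simpa using hbn)
      simpa using this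
    exact hbn (Polynomial.coeff_eq_zero_of_natDegree_lt (by omega))
/-- Let `f(X,Y) = a(X) + b(X)Y` be irreducible and separable of degree `n ≥ 1` in `X`
over `F(Y)`, let `R = F[Y][(aₙ + bₙY)⁻¹]` be the localization of `F[Y]` away from the
nonzero leading `X`-coefficient `aₙ + bₙ Y` of `f`, and let `S = R[X]/(f)`. Then `S` is
an integral domain which is integrally closed (in its field of fractions). -/
theorem adjoinRoot_isIntegrallyClosed
    (F : Type) [Field F] (a b : Polynomial F) (hb : b ≠ 0) (n : ℕ) (hn : 1 ≤ n)
    (hirr : Irreducible (linY F a b))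
    (hsep : ((linY F a b).map (algebraMap (Polynomial F) (RatFunc F))).Separable)
    (hdeg : ((linY F a b).map (algebraMap (Polynomial F) (RatFunc F))).natDegree = n)
    (hlc : (linY F a b).coeff n ≠ 0) :
    IsDomain (AdjoinRoot ((linY F a b).map
      (algebraMap (Polynomial F) (Localization.Away ((linY F a b).coeff n))))) ∧
    IsIntegrallyClosed (AdjoinRoot ((linY F a b).map
      (algebraMap (Polynomial F) (Localization.Away ((linY F a b).coeff n))))) := by
  classical
  have hcop : IsCoprime a b := linY_coprime F a b hb hirr
  obtain ⟨u, v, huv⟩ := hcop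
  set an := a.coeff n with han
  set bn := b.coeff n with hbn
  set r : Polynomial F := Polynomial.C an * b - Polynomial.C bn * a with hrdef
  have hr0 : r ≠ 0 := linY_r_ne_zero F a b hb ⟨u, v, huv⟩ n hn hlc
  set dd : Polynomial F := r * b with hdd
  have hdd0 : dd ≠ 0 := mul_ne_zero hr0 hb
  set c : Polynomial F := (linY F a b).coeff n with hc
  set R := Localization.Away c with hR
  set σ₀ : Polynomial F →+* R := algebraMap (Polynomial F) R with hσ₀
  set g : Polynomial R := (linY F a b).map σ₀ with hg
  set S := AdjoinRoot g with hS
  set T := Localization.Away dd with hT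
  set τ : Polynomial F →+* T := algebraMap (Polynomial F) T with hτ
  -- maps into `S`
  set σ : Polynomial F →+* S := (AdjoinRoot.of g).comp σ₀ with hσ
  set ρ : F →+* S := σ.comp Polynomial.C with hρ
  set θ : S := AdjoinRoot.root g with hθ
  set ev : Polynomial F →+* S := Polynomial.eval₂RingHom ρ θ with hev
  set yS : S := σ Polynomial.X with hyS
  have hevC : ∀ x : F, ev (Polynomial.C x) = ρ x := fun x => Polynomial.eval₂_C _ _
  have hevX : ev Polynomial.X = θ := Polynomial.eval₂_X _ _
  have hfθ : ev a + yS * ev b = 0 := by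
    have h1 : Polynomial.eval₂ σ θ (linY F a b) = 0 := by
      have h2 := AdjoinRoot.eval₂_root g
      rw [hg, Polynomial.eval₂_map] at h2
      exact h2
    rw [linY, Polynomial.eval₂_add, Polynomial.eval₂_mul, Polynomial.eval₂_C,
      Polynomial.eval₂_map, Polynomial.eval₂_map] at h1
    exact h1
  have ha' : ev a = -(yS * ev b) := eq_neg_of_add_eq_zero_left hfθ
  have hub : IsUnit (ev b) := by
    apply IsUnit.of_mul_eq_one (a := ev b) (ev v - ev u * yS)
    have h3 : ev (u * a + v * b) = 1 := by rw [huv, map_one]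
    rw [map_add, map_mul, map_mul, ha'] at h3
    linear_combination h3
  have hcu : IsUnit (σ c) :=
    (IsLocalization.Away.algebraMap_isUnit (S := R) c).map (AdjoinRoot.of g)
  have hcval : c = Polynomial.C an + Polynomial.X * Polynomial.C bn := linY_coeff F a b n
  have hσc : σ c = ρ an + yS * ρ bn := by
    rw [show σ c = σ (Polynomial.C an + Polynomial.X * Polynomial.C bn) from congrArg σ hcval,
      map_add, map_mul]
    rfl
  have hevr : ev r = σ c * ev b := by
    rw [hσc,
      show ev r = ev (Polynomial.C an * b - Polynomial.C bn * a) from congrArg ev hrdef,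
      map_sub, map_mul, map_mul, hevC, hevC, ha']
    ring
  have hur : IsUnit (ev r) := by rw [hevr]; exact hcu.mul hub
  have hudS : IsUnit (ev dd) := by rw [hdd, map_mul]; exact hur.mul hub
  set φ : T →+* S := IsLocalization.Away.lift dd hudS with hφ
  have hφτ : ∀ p, φ (τ p) = ev p := fun p => IsLocalization.Away.lift_eq dd hudS p
  -- maps into `T`
  set φF : F →+* T := τ.comp Polynomial.C with hφF
  have hτC : ∀ x : F, τ (Polynomial.C x) = φF x := fun _ => rfl
  have hτev : ∀ p : Polynomial F, Polynomial.eval₂ φF (τ Polynomial.X) p = τ p := by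
    intro p
    conv_rhs => rw [← Polynomial.eval₂_C_X (p := p)]
    rw [Polynomial.hom_eval₂]
  have hudT : IsUnit (τ dd) := IsLocalization.Away.algebraMap_isUnit (S := T) dd
  have hτdd : τ dd = τ r * τ b := (congrArg τ hdd).trans (map_mul τ r b)
  have hubT : IsUnit (τ b) := by
    have h := hudT; rw [hτdd] at h; exact isUnit_of_mul_isUnit_right h
  have hurT : IsUnit (τ r) := by
    have h := hudT; rw [hτdd] at h; exact isUnit_of_mul_isUnit_left h
  set Binv : T := ↑hubT.unit⁻¹ with hBinvdef
  have hBinv1 : τ b * Binv = 1 := hubT.mul_val_inv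
  set yT : T := -(τ a * Binv) with hyT
  set φY : Polynomial F →+* T := Polynomial.eval₂RingHom φF yT with hφY
  have hφYC : ∀ x, φY (Polynomial.C x) = φF x := fun x => Polynomial.eval₂_C _ _
  have hφYX : φY Polynomial.X = yT := Polynomial.eval₂_X _ _
  have hφYc : IsUnit (φY c) := by
    have h1 : φY c * τ b = τ r := by
      rw [show φY c = φY (Polynomial.C an + Polynomial.X * Polynomial.C bn) from congrArg φY hcval,
        map_add, map_mul, hφYC, hφYC, hφYX,
        show τ r = τ (Polynomial.C an * b - Polynomial.C bn * a) from congrArg τ hrdef,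
        map_sub, map_mul, map_mul, hτC, hτC, hyT]
      linear_combination (-(φF bn * τ a)) * hBinv1
    have h2 : φY c = τ r * Binv := by
      calc φY c = φY c * (τ b * Binv) := by rw [hBinv1, mul_one]
        _ = φY c * τ b * Binv := by ring
        _ = τ r * Binv := by rw [h1]
    rw [h2]
    exact hurT.mul hubT.unit⁻¹.isUnit
  set ψ₀ : R →+* T := IsLocalization.Away.lift c hφYc with hψ₀
  have hψ₀σ₀ : ∀ q, ψ₀ (σ₀ q) = φY q := fun q => IsLocalization.Away.lift_eq c hφYc q
  have hroot : Polynomial.eval₂ ψ₀ (τ Polynomial.X) g = 0 := by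
    rw [hg, Polynomial.eval₂_map]
    have hcomp : ψ₀.comp σ₀ = φY := IsLocalization.Away.lift_comp (x := c) hφYc
    rw [hcomp, linY, Polynomial.eval₂_add, Polynomial.eval₂_mul, Polynomial.eval₂_C,
      Polynomial.eval₂_map, Polynomial.eval₂_map]
    have hφYcC : φY.comp Polynomial.C = φF := RingHom.ext fun x => hφYC x
    rw [hφYcC, hτev, hτev, hφYX, hyT]
    linear_combination (-(τ a)) * hBinv1
  set ψ : S →+* T := AdjoinRoot.lift ψ₀ (τ Polynomial.X) hroot with hψ
  have hψθ : ψ θ = τ Polynomial.X := AdjoinRoot.lift_root hroot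
  have hψσ : ∀ q, ψ (σ q) = φY q := by
    intro q
    rw [hσ, RingHom.comp_apply, AdjoinRoot.lift_of]
    exact hψ₀σ₀ q
  have hψρ : ∀ x : F, ψ (ρ x) = φF x := by
    intro x
    rw [hρ, RingHom.comp_apply, hψσ]
    exact hφYC x
  have hψev : ∀ p, ψ (ev p) = τ p := by
    intro p
    have : ev p = Polynomial.eval₂ ρ θ p := rfl
    rw [this, Polynomial.hom_eval₂, hψθ]
    have hcomp : ψ.comp ρ = φF := RingHom.ext hψρ
    rw [hcomp, hτev]
  have hinv1 : ψ.comp φ = RingHom.id T := by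
    refine IsLocalization.ringHom_ext (Submonoid.powers dd) (RingHom.ext fun p => ?_)
    show ψ (φ (τ p)) = τ p
    rw [hφτ, hψev]
  have hφφY : ∀ q, φ (φY q) = σ q := by
    intro q
    have : φY q = Polynomial.eval₂ φF yT q := rfl
    rw [this, Polynomial.hom_eval₂]
    have hc1 : φ.comp φF = ρ := by
      refine RingHom.ext fun x => ?_
      show φ (τ (Polynomial.C x)) = ρ x
      rw [hφτ]; exact hevC x
    have hφB : φ Binv * ev b = 1 := by
      have h := congrArg φ hBinv1
      rw [map_mul, hφτ, map_one] at h
      linear_combination h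
    have hc2 : φ yT = yS := by
      rw [hyT, map_neg, map_mul, hφτ, ha']
      linear_combination yS * hφB
    rw [hc1, hc2]
    have hEq : Polynomial.eval₂RingHom ρ yS = σ := by
      refine Polynomial.ringHom_ext (fun x => ?_) ?_
      · exact Polynomial.eval₂_C _ _
      · exact Polynomial.eval₂_X _ _
    calc Polynomial.eval₂ ρ yS q = Polynomial.eval₂RingHom ρ yS q := rfl
      _ = σ q := by rw [hEq]
  have hinv2 : φ.comp ψ = RingHom.id S := by
    refine RingHom.ext fun s => ?_
    obtain ⟨p, rfl⟩ := AdjoinRoot.mk_surjective (g := g) s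
    have hcomp : (φ.comp ψ).comp (AdjoinRoot.mk g) = AdjoinRoot.mk g := by
      refine Polynomial.ringHom_ext (fun x => ?_) ?_
      · show φ (ψ (AdjoinRoot.mk g (Polynomial.C x))) = AdjoinRoot.mk g (Polynomial.C x)
        have hofx : AdjoinRoot.mk g (Polynomial.C x) = AdjoinRoot.of g x := rfl
        rw [hofx]
        have key : (φ.comp ψ).comp (AdjoinRoot.of g) = AdjoinRoot.of g := by
          refine IsLocalization.ringHom_ext (Submonoid.powers c) (RingHom.ext fun q => ?_)
          show φ (ψ (σ q)) = σ q
          rw [hψσ, hφφY]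
        exact RingHom.congr_fun key x
      · show φ (ψ (AdjoinRoot.mk g Polynomial.X)) = AdjoinRoot.mk g Polynomial.X
        rw [AdjoinRoot.mk_X, ← hθ, hψθ, hφτ]
        exact hevX
    exact RingHom.congr_fun hcomp p
  set e : T ≃+* S := RingEquiv.ofRingHom φ ψ hinv2 hinv1 with he
  have hM : Submonoid.powers dd ≤ nonZeroDivisors (Polynomial F) :=
    powers_le_nonZeroDivisors_of_noZeroDivisors hdd0
  letI : Algebra (Polynomial F) S := ((e : T →+* S).comp (algebraMap (Polynomial F) T)).toAlgebra
  haveI hloc : IsLocalization (Submonoid.powers dd) S :=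
    (IsLocalization.isLocalization_iff_of_ringEquiv (Submonoid.powers dd) e).mp
      (Localization.isLocalization)
  constructor
  · exact IsLocalization.isDomain_of_le_nonZeroDivisors (S := S) (M := Submonoid.powers dd) hM
  · exact isIntegrallyClosed_of_isLocalization S (Submonoid.powers dd) hM
end

section
/- Let M be a field with algebraic closure M̄ and let f(X,Y) ∈ M[X,Y] be of degree n ≥ 2 in X, separable as a polynomial in X over M(Y), and absolutely irreducible, i.e., irreducible as a polynomial in X over the rational function field M̄(Y). If the Galois group of f over M(Y) is a simple group, then the Galois groups of f over M(Y) and over M̄(Y) coincide: the image of Gal(f, M̄(Y)) in the permutation group of the n roots of f in a fixed algebraic closure of M(Y) equals the image of Gal(f, M(Y)); in particular f is X-stable over M. -/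
set_option synthInstance.maxHeartbeats 1000000
set_option maxHeartbeats 1000000

open Polynomial

/-- A field `F` is pseudo algebraically closed (PAC): every bivariate polynomial over `F`
that remains irreducible over an algebraic closure of `F` has a zero in `F × F`. -/
def IsPAC (F : Type) [Field F] : Prop :=
  ∀ g : MvPolynomial (Fin 2) F,
    Irreducible (MvPolynomial.map (algebraMap F (AlgebraicClosure F)) g) →
    ∃ x y : F, MvPolynomial.eval ![x, y] g = 0

/-- Transport of permutation groups along an equality of sets. -/
noncomputable def permSetCongr {α : Type} {s t : Set α} (h : s = t) :
    Equiv.Perm s ≃* Equiv.Perm t :=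
  { Equiv.permCongr (Equiv.setCongr h) with
    map_mul' := fun x y => by subst h; ext z; rfl }

/-- The faithful action of the Galois group of `f` over `K` on the set of roots of `f`
in an algebraic closure of `K`. -/
noncomputable def galPermAction (K : Type) [Field K] (f : Polynomial K) :
    f.Gal →* Equiv.Perm (f.rootSet (AlgebraicClosure K)) :=
  haveI : Fact ((f.map (algebraMap K (AlgebraicClosure K))).Splits) :=
    ⟨IsAlgClosed.splits _⟩
  Polynomial.Gal.galActionHom f (AlgebraicClosure K)

/-- The image of the Galois group of `f` over `M(Y)` in the group of permutations of the
roots of `f` in an algebraic closure of `M(Y)`. -/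
noncomputable def galRange (M : Type) [Field M] (f : Polynomial (RatFunc M)) :
    Subgroup (Equiv.Perm (f.rootSet (AlgebraicClosure (RatFunc M)))) :=
  (galPermAction (RatFunc M) f).range

/-- `M̄(Y)`: the subfield of a fixed algebraic closure of `M(Y)` generated over `M(Y)` by
all elements algebraic over `M` (i.e. by an algebraic closure of `M`). -/
noncomputable def algCl (M : Type) [Field M] :
    IntermediateField (RatFunc M) (AlgebraicClosure (RatFunc M)) :=
  IntermediateField.adjoin (RatFunc M) {x | IsAlgebraic M x}

lemma rootSetBarEq (M : Type) [Field M] (f : Polynomial (RatFunc M)) :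
    (f.map (algebraMap (RatFunc M) (algCl M))).rootSet (AlgebraicClosure (RatFunc M)) =
      f.rootSet (AlgebraicClosure (RatFunc M)) := by
  simp only [Polynomial.rootSet, Polynomial.aroots_def, Polynomial.map_map]
  rw [← IsScalarTower.algebraMap_eq]

/-- The image of the Galois group of `f` over `M̄(Y)` in the group of permutations of the
roots of `f` in an algebraic closure of `M(Y)`. -/
noncomputable def galRangeBar (M : Type) [Field M] (f : Polynomial (RatFunc M)) :
    Subgroup (Equiv.Perm (f.rootSet (AlgebraicClosure (RatFunc M)))) :=
  haveI : Fact (((f.map (algebraMap (RatFunc M) (algCl M))).map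
      (algebraMap (algCl M) (AlgebraicClosure (RatFunc M)))).Splits) :=
    ⟨IsAlgClosed.splits _⟩
  Subgroup.map (permSetCongr (rootSetBarEq M f)).toMonoidHom
    (Polynomial.Gal.galActionHom (f.map (algebraMap (RatFunc M) (algCl M)))
      (AlgebraicClosure (RatFunc M))).range

/-- A polynomial `f` in `X` with coefficients in `M(Y)` is `X`-stable over `M` if it is
irreducible over `M(Y)` and the images of its Galois groups over `M̄(Y)` and over `M(Y)`
in the permutation group of its roots coincide. -/
noncomputable def XStable (M : Type) [Field M] (f : Polynomial (RatFunc M)) : Prop :=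
  Irreducible f ∧ galRangeBar M f = galRange M f

section Aux

instance instIsAlgClosureAlgCl (M : Type) [Field M] :
    IsAlgClosure (algCl M) (AlgebraicClosure (RatFunc M)) where
  isAlgClosed := inferInstance
  isAlgebraic := Algebra.IsAlgebraic.tower_top (K := RatFunc M) (algCl M)

variable (M : Type) [Field M]

lemma coe_permSetCongr {α : Type} {s t : Set α} (h : s = t) (q : Equiv.Perm s) (x : t) :
    ((permSetCongr h q) x : α) = (q ((Equiv.setCongr h).symm x) : α) := by
  subst h; rfl

lemma mem_galRange_iff (f : Polynomial (RatFunc M))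
    (π : Equiv.Perm (f.rootSet (AlgebraicClosure (RatFunc M)))) :
    π ∈ galRange M f ↔ ∃ σ : AlgebraicClosure (RatFunc M) ≃ₐ[RatFunc M]
        AlgebraicClosure (RatFunc M),
      ∀ x : f.rootSet (AlgebraicClosure (RatFunc M)), (π x : AlgebraicClosure (RatFunc M)) = σ x := by
  haveI : Fact ((f.map (algebraMap (RatFunc M) (AlgebraicClosure (RatFunc M)))).Splits) :=
    ⟨IsAlgClosed.splits _⟩
  show π ∈ (Polynomial.Gal.galActionHom f (AlgebraicClosure (RatFunc M))).range ↔ _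
  constructor
  · rintro ⟨φ, rfl⟩
    obtain ⟨σ, rfl⟩ := Polynomial.Gal.restrict_surjective f (AlgebraicClosure (RatFunc M)) φ
    exact ⟨σ, fun x => Polynomial.Gal.galActionHom_restrict f (AlgebraicClosure (RatFunc M)) σ x⟩
  · rintro ⟨σ, hσ⟩
    refine ⟨Polynomial.Gal.restrict f (AlgebraicClosure (RatFunc M)) σ, ?_⟩
    ext x
    exact ((Polynomial.Gal.galActionHom_restrict f (AlgebraicClosure (RatFunc M)) σ x).trans
      (hσ x).symm)

lemma mem_galRangeBar_iff (f : Polynomial (RatFunc M))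
    (π : Equiv.Perm (f.rootSet (AlgebraicClosure (RatFunc M)))) :
    π ∈ galRangeBar M f ↔ ∃ σ : AlgebraicClosure (RatFunc M) ≃ₐ[algCl M]
        AlgebraicClosure (RatFunc M),
      ∀ x : f.rootSet (AlgebraicClosure (RatFunc M)), (π x : AlgebraicClosure (RatFunc M)) = σ x := by
  haveI : Fact (((f.map (algebraMap (RatFunc M) (algCl M))).map
      (algebraMap (algCl M) (AlgebraicClosure (RatFunc M)))).Splits) :=
    ⟨IsAlgClosed.splits _⟩
  set h := f.map (algebraMap (RatFunc M) (algCl M)) with hh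
  show π ∈ Subgroup.map (permSetCongr (rootSetBarEq M f)).toMonoidHom
    (Polynomial.Gal.galActionHom h (AlgebraicClosure (RatFunc M))).range ↔ _
  rw [Subgroup.mem_map]
  constructor
  · rintro ⟨q, ⟨φ, rfl⟩, rfl⟩
    obtain ⟨σ, rfl⟩ := Polynomial.Gal.restrict_surjective h (AlgebraicClosure (RatFunc M)) φ
    refine ⟨σ, fun x => ?_⟩
    rw [MulEquiv.coe_toMonoidHom, coe_permSetCongr,
      Polynomial.Gal.galActionHom_restrict h (AlgebraicClosure (RatFunc M))]
    congr 1
  · rintro ⟨σ, hσ⟩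
    refine ⟨Polynomial.Gal.galActionHom h (AlgebraicClosure (RatFunc M))
      (Polynomial.Gal.restrict h (AlgebraicClosure (RatFunc M)) σ),
      ⟨_, rfl⟩, ?_⟩
    ext x
    rw [MulEquiv.coe_toMonoidHom, coe_permSetCongr,
      Polynomial.Gal.galActionHom_restrict h (AlgebraicClosure (RatFunc M)), hσ x]
    congr 1

lemma sigma_maps_algCl (σ : AlgebraicClosure (RatFunc M) ≃ₐ[RatFunc M] AlgebraicClosure (RatFunc M))
    {x : AlgebraicClosure (RatFunc M)} (hx : x ∈ algCl M) : σ x ∈ algCl M := by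
  have h1 : (algCl M).map σ.toAlgHom ≤ algCl M := by
    rw [algCl, IntermediateField.adjoin_map, IntermediateField.adjoin_le_iff]
    rintro y ⟨z, hz, rfl⟩
    refine IntermediateField.subset_adjoin _ _ ?_
    obtain ⟨p, hp0, hpz⟩ := hz
    refine ⟨p, hp0, ?_⟩
    have := Polynomial.aeval_algHom_apply ((σ.restrictScalars M).toAlgHom) z p
    show (aeval ((σ.restrictScalars M) z)) p = 0
    simpa [hpz] using this
  exact h1 ⟨x, hx, rfl⟩

lemma tau_fixes_algCl (τ : AlgebraicClosure (RatFunc M) ≃ₐ[algCl M] AlgebraicClosure (RatFunc M))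
    {x : AlgebraicClosure (RatFunc M)} (hx : x ∈ algCl M) : τ x = x := by
  have := τ.commutes ⟨x, hx⟩
  simpa using this

/-- conjugation of an `algCl`-automorphism by an `M(Y)`-automorphism. -/
noncomputable def conjAut (σ : AlgebraicClosure (RatFunc M) ≃ₐ[RatFunc M] AlgebraicClosure (RatFunc M))
    (τ : AlgebraicClosure (RatFunc M) ≃ₐ[algCl M] AlgebraicClosure (RatFunc M)) :
    AlgebraicClosure (RatFunc M) ≃ₐ[algCl M] AlgebraicClosure (RatFunc M) :=
  AlgEquiv.ofRingEquiv (f := (σ.symm.trans ((τ.restrictScalars (RatFunc M)).trans σ)).toRingEquiv)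
    (fun y => by
      show σ ((τ.restrictScalars (RatFunc M)) (σ.symm (algebraMap (algCl M) _ y))) = _
      have h1 : σ.symm (algebraMap (algCl M) _ y) ∈ algCl M :=
        sigma_maps_algCl M σ.symm y.2
      rw [show ((τ.restrictScalars (RatFunc M)) (σ.symm (algebraMap (algCl M) _ y)))
          = σ.symm (algebraMap (algCl M) _ y) from tau_fixes_algCl M τ h1]
      exact σ.apply_symm_apply _)

lemma conjAut_apply (σ : AlgebraicClosure (RatFunc M) ≃ₐ[RatFunc M] AlgebraicClosure (RatFunc M))
    (τ : AlgebraicClosure (RatFunc M) ≃ₐ[algCl M] AlgebraicClosure (RatFunc M))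
    (x : AlgebraicClosure (RatFunc M)) : conjAut M σ τ x = σ (τ (σ.symm x)) := rfl

lemma irreducible_of_irreducible_map' {F L : Type} [Field F] [Field L] (φ : F →+* L)
    (p : Polynomial F) (hp : Irreducible (p.map φ)) : Irreducible p := by
  constructor
  · intro hu
    exact hp.not_isUnit (hu.map (Polynomial.mapRingHom φ))
  · intro a b hab
    have := hp.isUnit_or_isUnit (show p.map φ = a.map φ * b.map φ by rw [hab, Polynomial.map_mul])
    rcases this with h1 | h1
    · left
      rw [Polynomial.isUnit_iff_degree_eq_zero] at h1 ⊢
      rwa [Polynomial.degree_map] at h1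
    · right
      rw [Polynomial.isUnit_iff_degree_eq_zero] at h1 ⊢
      rwa [Polynomial.degree_map] at h1


end Aux

/-- (Jarden) If `f(X,Y) ∈ M[X,Y]` has degree `n ≥ 2` in `X`, is separable over `M(Y)`,
is absolutely irreducible (irreducible over `M̄(Y)`), and its Galois group over `M(Y)` is
simple, then the images of the Galois groups of `f` over `M̄(Y)` and over `M(Y)` in the
permutation group of the roots coincide; in particular `f` is `X`-stable over `M`. -/
theorem xStable_of_simple_galois_group
    (M : Type) [Field M] (n : ℕ) (hn : 2 ≤ n)
    (f : Polynomial (Polynomial M)) (hdeg : f.natDegree = n)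
    (hsep : (f.map (algebraMap (Polynomial M) (RatFunc M))).Separable)
    (habs : Irreducible ((f.map (algebraMap (Polynomial M) (RatFunc M))).map
      (algebraMap (RatFunc M) (algCl M))))
    (hsimple : IsSimpleGroup (f.map (algebraMap (Polynomial M) (RatFunc M))).Gal) :
    galRangeBar M (f.map (algebraMap (Polynomial M) (RatFunc M))) =
      galRange M (f.map (algebraMap (Polynomial M) (RatFunc M))) ∧
    XStable M (f.map (algebraMap (Polynomial M) (RatFunc M))) := by
  set g := f.map (algebraMap (Polynomial M) (RatFunc M)) with hgdef
  set h := g.map (algebraMap (RatFunc M) (algCl M)) with hhdef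
  haveI factg : Fact ((g.map (algebraMap (RatFunc M) (AlgebraicClosure (RatFunc M)))).Splits) :=
    ⟨IsAlgClosed.splits _⟩
  haveI facth : Fact ((h.map (algebraMap (algCl M) (AlgebraicClosure (RatFunc M)))).Splits) :=
    ⟨IsAlgClosed.splits _⟩
  have hgdeg : g.natDegree = n := by
    rw [hgdef, Polynomial.natDegree_map_eq_of_injective, hdeg]
    exact RatFunc.algebraMap_injective M
  have hhdeg : h.natDegree = n := by
    rw [hhdef, Polynomial.natDegree_map_eq_of_injective, hgdeg]
    exact (algebraMap (RatFunc M) (algCl M)).injective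
  have hirr : Irreducible g := irreducible_of_irreducible_map' _ g habs
  -- `galRangeBar ≤ galRange`
  have hle : galRangeBar M g ≤ galRange M g := by
    intro π hπ
    rw [mem_galRangeBar_iff] at hπ
    obtain ⟨σ, hσ⟩ := hπ
    rw [mem_galRange_iff]
    exact ⟨σ.restrictScalars (RatFunc M), hσ⟩
  -- normality
  have hnormal : ((galRangeBar M g).subgroupOf (galRange M g)).Normal := by
    constructor
    intro q hq p
    rw [Subgroup.mem_subgroupOf] at hq ⊢
    rw [mem_galRangeBar_iff] at hq ⊢
    obtain ⟨τ, hτ⟩ := hq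
    obtain ⟨σ, hσ⟩ := (mem_galRange_iff M g ↑p).mp p.2
    have hp_inv : ∀ x, (((↑p : Equiv.Perm _)⁻¹ x : g.rootSet (AlgebraicClosure (RatFunc M))) :
        AlgebraicClosure (RatFunc M)) = σ.symm ↑x := by
      intro x
      have h2 := hσ ((↑p : Equiv.Perm _)⁻¹ x)
      rw [Equiv.Perm.coe_inv, Equiv.apply_symm_apply] at h2
      exact ((σ.symm_apply_eq).mpr h2).symm
    refine ⟨conjAut M σ τ, fun x => ?_⟩
    have hcoe : ((↑(p * q * p⁻¹) : Equiv.Perm (g.rootSet (AlgebraicClosure (RatFunc M)))) x)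
        = (↑p : Equiv.Perm _) ((↑q : Equiv.Perm _) ((↑p : Equiv.Perm _)⁻¹ x)) := rfl
    rw [hcoe, hσ, hτ, hp_inv, conjAut_apply]
  -- transfer simplicity
  have hinj : Function.Injective (galPermAction (RatFunc M) g) := by
    show Function.Injective (Polynomial.Gal.galActionHom g (AlgebraicClosure (RatFunc M)))
    exact Polynomial.Gal.galActionHom_injective g (AlgebraicClosure (RatFunc M))
  let e : g.Gal ≃* ↥(galRange M g) := MonoidHom.ofInjective hinj
  set N : Subgroup g.Gal :=
    Subgroup.comap e.toMonoidHom ((galRangeBar M g).subgroupOf (galRange M g)) with hN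
  haveI hNn : N.Normal := hnormal.comap e.toMonoidHom
  haveI := hsimple
  have hbt := hNn.eq_bot_or_eq_top
  have hmap : Subgroup.map e.toMonoidHom N = (galRangeBar M g).subgroupOf (galRange M g) := by
    rw [hN]
    exact Subgroup.map_comap_eq_self_of_surjective e.surjective _
  have heq : galRangeBar M g = galRange M g := by
    rcases hbt with hbot | htop
    · exfalso
      have hsubbot : (galRangeBar M g).subgroupOf (galRange M g) = ⊥ := by
        rw [← hmap, hbot, Subgroup.map_bot]
      have hBbot : galRangeBar M g = ⊥ := by
        rw [eq_bot_iff]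
        intro x hx
        have hx' : (⟨x, hle hx⟩ : galRange M g) ∈ (galRangeBar M g).subgroupOf (galRange M g) := by
          rw [Subgroup.mem_subgroupOf]; exact hx
        rw [hsubbot, Subgroup.mem_bot] at hx'
        rw [Subgroup.mem_bot]
        exact congrArg Subtype.val hx'
      -- but `h` is irreducible of degree ≥ 2 and separable, so its Galois action is nontrivial
      have hsep' : h.Separable := hsep.map
      have hcard : Fintype.card (h.rootSet (AlgebraicClosure (RatFunc M))) = n := by
        rw [Polynomial.card_rootSet_eq_natDegree hsep' (IsAlgClosed.splits _), hhdeg]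
      obtain ⟨a, b, hab⟩ := Fintype.exists_pair_of_one_lt_card (by omega : 1 < Fintype.card
        (h.rootSet (AlgebraicClosure (RatFunc M))))
      have ht := Polynomial.Gal.galAction_isPretransitive h (AlgebraicClosure (RatFunc M)) habs
      obtain ⟨φ, hφ⟩ := ht.exists_smul_eq a b
      have hmem : (permSetCongr (rootSetBarEq M g))
          (Polynomial.Gal.galActionHom h (AlgebraicClosure (RatFunc M)) φ) ∈ galRangeBar M g := by
        exact ⟨_, ⟨φ, rfl⟩, rfl⟩
      rw [hBbot, Subgroup.mem_bot] at hmem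
      have hone : Polynomial.Gal.galActionHom h (AlgebraicClosure (RatFunc M)) φ = 1 :=
        (permSetCongr (rootSetBarEq M g)).injective (by rw [hmem, map_one])
      have ha : Polynomial.Gal.galActionHom h (AlgebraicClosure (RatFunc M)) φ a = φ • a := rfl
      rw [hone, hφ] at ha
      simp only [Equiv.Perm.coe_one, id_eq] at ha
      exact hab ha
    · have hsubtop : (galRangeBar M g).subgroupOf (galRange M g) = ⊤ := by
        rw [← hmap, htop]
        exact Subgroup.map_top_of_surjective _ e.surjective
      exact le_antisymm hle (Subgroup.subgroupOf_eq_top.mp hsubtop)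
  refine ⟨heq, ?_⟩
  unfold XStable
  exact ⟨hirr, heq⟩
end
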